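/- arXiv:2412.15994 — 2 statements merged into one kernel-verified Lean document; each statement's English description precedes it below -/
import Mathlib

section
/- Let f : [a, b] → ℝ be absolutely continuous (or C¹) with f(a) = s₀ and f(b) = s₁, where s₀ ≤ s₁. Then for every ε > 0, (1/ε)∫_a^b (f(t)² − 1)² dt + ε ∫_a^b f′(t)² dt ≥ 2 ∫_{s₀}^{s₁} |1 − σ²| dσ. -/
theorem modica_mortola_one_d_lower_bound (a b : ℝ) (hab : a < b)
    (f f' : ℝ → ℝ) (hderiv : ∀ t ∈ Set.Icc a b, HasDerivAt f (f' t) t)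
    (hcont : ContinuousOn f' (Set.Icc a b))
    (s₀ s₁ : ℝ) (hfa : f a = s₀) (hfb : f b = s₁) (hs : s₀ ≤ s₁)
    (ε : ℝ) (hε : 0 < ε) :
    (1 / ε) * (∫ t in a..b, (f t ^ 2 - 1) ^ 2) + ε * (∫ t in a..b, (f' t) ^ 2) ≥
      2 * ∫ σ in s₀..s₁, |1 - σ ^ 2| := by
  have hab' : a ≤ b := hab.le
  have huIcc : Set.uIcc a b = Set.Icc a b := Set.uIcc_of_le hab'
  have hderiv' : ∀ x ∈ Set.uIcc a b, HasDerivAt f (f' x) x := by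
    rw [huIcc]; exact hderiv
  have hcont' : ContinuousOn f' (Set.uIcc a b) := by rw [huIcc]; exact hcont
  have hfc : ContinuousOn f (Set.uIcc a b) := fun t ht =>
    (hderiv' t ht).continuousAt.continuousWithinAt
  have hg : Continuous (fun σ : ℝ => |1 - σ ^ 2|) := by continuity
  have key : ∫ σ in s₀..s₁, |1 - σ ^ 2| = ∫ t in a..b, f' t * |1 - f t ^ 2| := by
    rw [← hfa, ← hfb]
    exact (intervalIntegral.integral_comp_smul_deriv hderiv' hcont' hg).symm
  -- integrability facts
  have h1 : IntervalIntegrable (fun t => (f t ^ 2 - 1) ^ 2) MeasureTheory.volume a b :=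
    (ContinuousOn.pow (by fun_prop) 2).intervalIntegrable
  have h2 : IntervalIntegrable (fun t => (f' t) ^ 2) MeasureTheory.volume a b :=
    (hcont'.pow 2).intervalIntegrable
  have h3 : IntervalIntegrable (fun t => 2 * (f' t * |1 - f t ^ 2|)) MeasureTheory.volume a b := by
    apply ContinuousOn.intervalIntegrable
    exact (continuousOn_const.mul (hcont'.mul ((hg.comp_continuousOn hfc)))) |>.congr
      (fun x hx => rfl)
  have hptwise : ∀ t ∈ Set.Icc a b,
      2 * (f' t * |1 - f t ^ 2|) ≤ (1 / ε) * (f t ^ 2 - 1) ^ 2 + ε * (f' t) ^ 2 := by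
    intro t _
    have hA : 0 ≤ |1 - f t ^ 2| := abs_nonneg _
    have hA2 : |1 - f t ^ 2| ^ 2 = (f t ^ 2 - 1) ^ 2 := by
      rw [sq_abs]; ring
    have hv : f' t ≤ |f' t| := le_abs_self _
    have hv2 : |f' t| ^ 2 = (f' t) ^ 2 := sq_abs _
    have hsq : 0 ≤ (|1 - f t ^ 2| - ε * |f' t|) ^ 2 := sq_nonneg _
    have h2v : 2 * (f' t * |1 - f t ^ 2|) ≤ 2 * (|f' t| * |1 - f t ^ 2|) := by
      nlinarith
    have : 2 * ε * (|f' t| * |1 - f t ^ 2|) ≤ (f t ^ 2 - 1) ^ 2 + ε ^ 2 * (f' t) ^ 2 := by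
      nlinarith
    rw [div_mul_eq_mul_div, one_mul, div_add' _ _ _ hε.ne', le_div_iff₀ hε]
    nlinarith
  have hmono : ∫ t in a..b, 2 * (f' t * |1 - f t ^ 2|) ≤
      ∫ t in a..b, ((1 / ε) * (f t ^ 2 - 1) ^ 2 + ε * (f' t) ^ 2) := by
    apply intervalIntegral.integral_mono_on hab' h3
    · exact ((h1.const_mul (1/ε)).add (h2.const_mul ε))
    · exact hptwise
  calc 2 * ∫ σ in s₀..s₁, |1 - σ ^ 2|
      = ∫ t in a..b, 2 * (f' t * |1 - f t ^ 2|) := by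
        rw [key, intervalIntegral.integral_const_mul]
    _ ≤ ∫ t in a..b, ((1 / ε) * (f t ^ 2 - 1) ^ 2 + ε * (f' t) ^ 2) := hmono
    _ = (1 / ε) * (∫ t in a..b, (f t ^ 2 - 1) ^ 2) + ε * (∫ t in a..b, (f' t) ^ 2) := by
        rw [intervalIntegral.integral_add (h1.const_mul (1/ε)) (h2.const_mul ε),
          intervalIntegral.integral_const_mul, intervalIntegral.integral_const_mul]
end

section
/- Let v : [0, L] → ℝ be continuous with v(0) = 0 and v(L) = 1, and let β : [0, L] → ℝ be a function with |β(t) − 1| ≤ γ for all t, where 0 ≤ γ ≤ 1/2. If v is piecewise affine with nodes t_0 = 0 < t_1 < … < t_M = L, then Σ_{m=0}^{M−1} (1/√2)·|(β(t_m) v(t_m))² − 1| · |v(t_{m+1}) − v(t_m)| ≥ 1/(4√2) − C γ for a universal constant C > 0. -/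
/-!
The potential `Φ(s) = r - c² r³ / 3` with `r = min |s| c⁻¹` is a concave primitive, in `|s|`, of
the weight `max 0 (1 - c² s²)`. For `c = 3/2` we have `|β| ≤ c`, so this weight is dominated by
`|(β s)² - 1|` and each term of the sum bounds the increment of `Φ` between consecutive nodes.
The sum therefore telescopes to at least `(Φ(1) - Φ(0)) / √2 = 4 / (9√2) > 1 / (4√2)`.
-/

open Finset

noncomputable section

def cubicPotential (c x : ℝ) : ℝ := x - c ^ 2 * x ^ 3 / 3

lemma cubicPotential_sub_le {c A B : ℝ} (hA : 0 ≤ A) (hB : 0 ≤ B) :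
    cubicPotential c B - cubicPotential c A ≤ (1 - c ^ 2 * A ^ 2) * (B - A) := by
  have hgap : cubicPotential c B - cubicPotential c A - (1 - c ^ 2 * A ^ 2) * (B - A)
      = -(c ^ 2 / 3) * ((B - A) ^ 2 * (B + 2 * A)) := by
    unfold cubicPotential; ring
  have : 0 ≤ c ^ 2 / 3 * ((B - A) ^ 2 * (B + 2 * A)) := by positivity
  linarith

def transitionPotential (c s : ℝ) : ℝ := cubicPotential c (min |s| c⁻¹)

lemma transitionPotential_zero {c : ℝ} (hc : 0 ≤ c) : transitionPotential c 0 = 0 := by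
  simp [transitionPotential, cubicPotential, hc]

lemma transitionPotential_one {c : ℝ} (hc : 1 ≤ c) : transitionPotential c 1 = 2 / (3 * c) := by
  have hc0 : c ≠ 0 := by positivity
  rw [transitionPotential, abs_one, min_eq_right (inv_le_one_of_one_le₀ hc), cubicPotential]
  field_simp
  ring

lemma transitionPotential_sub_le {c a b w : ℝ} (hc : 0 < c) (hw₀ : 0 ≤ w)
    (hw : 1 - c ^ 2 * a ^ 2 ≤ w) :
    transitionPotential c b - transitionPotential c a ≤ w * |b - a| := by
  set A := min |a| c⁻¹
  set B := min |b| c⁻¹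
  have hA₀ : 0 ≤ A := le_min (abs_nonneg a) (inv_nonneg.2 hc.le)
  have hcA : c * A ≤ 1 := by
    simpa [hc.ne'] using mul_le_mul_of_nonneg_left (min_le_right |a| c⁻¹) hc.le
  have hslope : 0 ≤ 1 - c ^ 2 * A ^ 2 ∧ 1 - c ^ 2 * A ^ 2 ≤ w := by
    refine ⟨by nlinarith [mul_nonneg hc.le hA₀], ?_⟩
    obtain h | h : A = |a| ∨ A = c⁻¹ := min_choice _ _ <;> rw [h]
    · rwa [sq_abs]
    · rw [inv_pow, mul_inv_cancel₀ (by positivity), sub_self]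
      exact hw₀
  have hBA : B - A ≤ |b - a| := calc
    B - A ≤ |B - A| := le_abs_self _
    _ ≤ max |(|b| - |a|)| |c⁻¹ - c⁻¹| := abs_min_sub_min_le_max _ _ _ _
    _ = |(|b| - |a|)| := by simp
    _ ≤ |b - a| := abs_abs_sub_abs_le_abs_sub b a
  calc transitionPotential c b - transitionPotential c a
      ≤ (1 - c ^ 2 * A ^ 2) * (B - A) :=
        cubicPotential_sub_le hA₀ (le_min (abs_nonneg b) (inv_nonneg.2 hc.le))
    _ ≤ (1 - c ^ 2 * A ^ 2) * |b - a| := mul_le_mul_of_nonneg_left hBA hslope.1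
    _ ≤ w * |b - a| := mul_le_mul_of_nonneg_right hslope.2 (abs_nonneg _)

lemma transitionPotential_sub_le_sum {c : ℝ} (hc : 0 < c) {x w : ℕ → ℝ} {M : ℕ}
    (hw₀ : ∀ m < M, 0 ≤ w m) (hw : ∀ m < M, 1 - c ^ 2 * x m ^ 2 ≤ w m) :
    transitionPotential c (x M) - transitionPotential c (x 0)
      ≤ ∑ m ∈ range M, w m * |x (m + 1) - x m| := by
  rw [← sum_range_sub (fun m ↦ transitionPotential c (x m))]
  refine sum_le_sum fun m hm ↦ ?_
  rw [mem_range] at hm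
  exact transitionPotential_sub_le hc (hw₀ m hm) (hw m hm)

lemma one_sub_sq_mul_sq_le_abs {β c a : ℝ} (hβ : |β| ≤ c) :
    1 - c ^ 2 * a ^ 2 ≤ |(β * a) ^ 2 - 1| := by
  have : β ^ 2 ≤ c ^ 2 := sq_le_sq' (abs_le.mp hβ).1 (abs_le.mp hβ).2
  calc 1 - c ^ 2 * a ^ 2 ≤ 1 - (β * a) ^ 2 := by
        rw [mul_pow]; nlinarith [sq_nonneg a]
    _ ≤ |(β * a) ^ 2 - 1| := by rw [abs_sub_comm]; exact le_abs_self _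

end

theorem phase_transition_cost_lower_bound :
    ∃ C : ℝ, 0 < C ∧
      ∀ (L : ℝ) (_ : 0 < L) (M : ℕ) (_ : 0 < M) (t : ℕ → ℝ) (v β : ℝ → ℝ) (γ : ℝ),
        0 ≤ γ → γ ≤ 1 / 2 →
        ContinuousOn v (Set.Icc 0 L) →
        v 0 = 0 → v L = 1 →
        (∀ s ∈ Set.Icc (0 : ℝ) L, |β s - 1| ≤ γ) →
        t 0 = 0 → t M = L →
        (∀ m < M, t m < t (m + 1)) →
        (∀ m < M, ∀ s ∈ Set.Icc (t m) (t (m + 1)),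
          v s = v (t m) + (s - t m) / (t (m + 1) - t m) * (v (t (m + 1)) - v (t m))) →
        ∑ m ∈ Finset.range M,
            (1 / Real.sqrt 2) * |(β (t m) * v (t m)) ^ 2 - 1| * |v (t (m + 1)) - v (t m)|
          ≥ 1 / (4 * Real.sqrt 2) - C * γ := by
  refine ⟨1, one_pos, ?_⟩
  intro L _ M _ t v β γ hγ₀ hγ _ hv0 hvL hβ ht0 htM ht _
  have ht_mono : MonotoneOn t (Set.Iic M) := (strictMonoOn_Iic_of_lt_succ ht).monotoneOn
  have hβ_le : ∀ m < M, |β (t m)| ≤ 3 / 2 := fun m hm ↦ by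
    have hnode : t m ∈ Set.Icc 0 L := by
      rw [← ht0, ← htM]
      exact ⟨ht_mono (by simp) (by simp [hm.le]) (Nat.zero_le m),
        ht_mono (by simp [hm.le]) (by simp) hm.le⟩
    have := abs_sub_abs_le_abs_sub (β (t m)) 1
    rw [abs_one] at this
    linarith [hβ _ hnode]
  have hcost : 4 / 9 ≤
      ∑ m ∈ range M, |(β (t m) * v (t m)) ^ 2 - 1| * |v (t (m + 1)) - v (t m)| := by
    have := transitionPotential_sub_le_sum (c := 3 / 2) (x := v ∘ t) (by norm_num)
      (fun _ _ ↦ abs_nonneg _) (fun m hm ↦ one_sub_sq_mul_sq_le_abs (hβ_le m hm))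
    rw [Function.comp_apply, Function.comp_apply, ht0, htM, hv0, hvL,
      transitionPotential_zero (by norm_num), transitionPotential_one (by norm_num)] at this
    norm_num at this
    exact this
  simp_rw [mul_assoc, ← mul_sum]
  have hk : 0 ≤ 1 / √2 := by positivity
  rw [show 1 / (4 * √2) = 1 / √2 / 4 by ring]
  linarith [mul_le_mul_of_nonneg_left hcost hk]
end
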